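/- Let G_z be a positive definite Hermitian M×M complex matrix and let W = [W_s, W_z] ∈ ℂ^{M×M} be invertible with W_s ∈ ℂ^{M×K} its first K columns. Suppose the K×K matrix W_s^H G_z E_s is invertible, and define V ∈ ℂ^{M×(M−K)} as the block matrix whose top K×(M−K) block is −(W_s^H G_z E_s)^{−1}(W_s^H G_z E_z) and whose bottom (M−K)×(M−K) block is the identity I_{M−K}. Then the column space of V equals the column space of U_z = (W^H G_z)^{−1} E_z, and both equal the kernel of the linear map v ↦ W_s^H G_z v on ℂ^M. -/

import Mathlib

/-! Since `W_s = W E_s`, the map `v ↦ W_sᴴ G_z v` is `E_sᵀ N` with `N = Wᴴ G_z` invertible. It has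
the right inverse `N⁻¹ E_s`, so its kernel has dimension `L = M - K`. Both `V` and `U_z` have `L`
columns, are killed by `W_sᴴ G_z` (for `V` by the choice of its top block, for `U_z` because
`E_sᵀ E_z = 0`) and have left inverses (`E_zᵀ` and `E_zᵀ N`), so each spans that kernel. -/

/- M×M complex matrices are encoded as matrices indexed by `Fin K ⊕ Fin L`,
where `M = K + L`, `K ≥ 1`, `L = M - K ≥ 1`. For `W`, its first `K` columns
(`Sum.inl`) form `W_s`. `E_s = [e_1, …, e_K]`, `E_z = [e_{K+1}, …, e_M]`.
The block matrix `V` with top block `−(W_sᴴ G_z E_s)⁻¹(W_sᴴ G_z E_z)` and bottom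
block `I` is `Matrix.fromRows`. The column space of `A` is
`Submodule.span ℂ (Set.range Aᵀ)`; the linear map `v ↦ W_sᴴ G_z v` is
`(W_sᴴ * G_z).mulVecLin`. -/

open Matrix
open scoped ComplexOrder

/-- `E_s = [e_1, …, e_K]`. -/
def Es (K L : ℕ) : Matrix (Fin K ⊕ Fin L) (Fin K) ℂ :=
  Matrix.of fun i j => if i = Sum.inl j then 1 else 0

/-- `E_z = [e_{K+1}, …, e_M]`. -/
def Ez (K L : ℕ) : Matrix (Fin K ⊕ Fin L) (Fin L) ℂ :=
  Matrix.of fun i j => if i = Sum.inr j then 1 else 0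

namespace Matrix

variable {R : Type*} [Field R] {m n p : Type*} [Fintype m] [Fintype n]

theorem finrank_ker_mulVecLin_of_mul_eq_one [Fintype p] [DecidableEq p] {A : Matrix p m R}
    {B : Matrix m p R} (hAB : A * B = 1) :
    Module.finrank R (LinearMap.ker A.mulVecLin) = Fintype.card m - Fintype.card p := by
  have hsurj : Function.Surjective A.mulVecLin :=
    Function.LeftInverse.surjective (g := B.mulVec) fun v => by
      simp [mulVec_mulVec, hAB]
  have := LinearMap.finrank_range_add_finrank_ker A.mulVecLin
  rw [LinearMap.range_eq_top.mpr hsurj, finrank_top, Module.finrank_fintype_fun_eq_card,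
    Module.finrank_fintype_fun_eq_card] at this
  omega

theorem span_range_transpose_eq_ker_mulVecLin [DecidableEq n] {A : Matrix p m R}
    {M : Matrix m n R} {C : Matrix n m R} (hCM : C * M = 1) (hAM : A * M = 0)
    (hker : Module.finrank R (LinearMap.ker A.mulVecLin) = Fintype.card n) :
    Submodule.span R (Set.range Mᵀ) = LinearMap.ker A.mulVecLin := by
  have hinj : Function.Injective M.mulVecLin :=
    Function.LeftInverse.injective (g := C.mulVec) fun v => by
      simp [mulVec_mulVec, hCM]
  change Submodule.span R (Set.range M.col) = _
  rw [← range_mulVecLin]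
  apply Submodule.eq_of_le_of_finrank_eq
  · rw [LinearMap.range_le_ker_iff, ← mulVecLin_mul, hAM, mulVecLin_zero]
  · rw [LinearMap.finrank_range_of_inj hinj, hker, Module.finrank_fintype_fun_eq_card]

end Matrix

section BasisBlocks

variable (K L : ℕ)

theorem Es_eq_fromRows : Es K L = fromRows 1 0 := by
  ext (i | i) j <;> simp [Es, one_apply]

theorem Ez_eq_fromRows : Ez K L = fromRows 0 1 := by
  ext (i | i) j <;> simp [Ez, one_apply]

theorem transpose_Es_mul_Es : (Es K L)ᵀ * Es K L = 1 := by
  simp [Es_eq_fromRows, transpose_fromRows, fromCols_mul_fromRows]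

theorem transpose_Es_mul_Ez : (Es K L)ᵀ * Ez K L = 0 := by
  simp [Es_eq_fromRows, Ez_eq_fromRows, transpose_fromRows, fromCols_mul_fromRows]

theorem transpose_Ez_mul_Ez : (Ez K L)ᵀ * Ez K L = 1 := by
  simp [Ez_eq_fromRows, transpose_fromRows, fromCols_mul_fromRows]

theorem transpose_Ez_mul_fromRows {n : Type*} (X : Matrix (Fin K) n ℂ) (Y : Matrix (Fin L) n ℂ) :
    (Ez K L)ᵀ * fromRows X Y = Y := by
  simp [Ez_eq_fromRows, transpose_fromRows, fromCols_mul_fromRows]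

theorem mul_fromRows_eq_mul_Es_add_mul_Ez {m n : Type*} (A : Matrix m (Fin K ⊕ Fin L) ℂ)
    (X : Matrix (Fin K) n ℂ) (Y : Matrix (Fin L) n ℂ) :
    A * fromRows X Y = A * Es K L * X + A * Ez K L * Y := by
  rw [← fromCols_toCols A, fromCols_mul_fromRows, Es_eq_fromRows, Ez_eq_fromRows,
    fromCols_mul_fromRows, fromCols_mul_fromRows]
  simp

theorem conjTranspose_submatrix_inl_eq_transpose_Es_mul
    (W : Matrix (Fin K ⊕ Fin L) (Fin K ⊕ Fin L) ℂ) :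
    (W.submatrix id Sum.inl)ᴴ = (Es K L)ᵀ * Wᴴ := by
  ext i j
  simp [Es, mul_apply]

end BasisBlocks

theorem colSpace_V_eq_colSpace_Uz_general (K L : ℕ)
    (Gz : Matrix (Fin K ⊕ Fin L) (Fin K ⊕ Fin L) ℂ) (hGz : Gz.PosDef)
    (W : Matrix (Fin K ⊕ Fin L) (Fin K ⊕ Fin L) ℂ) (hW : IsUnit W.det)
    (Ws : Matrix (Fin K ⊕ Fin L) (Fin K) ℂ) (hWs : Ws = W.submatrix id Sum.inl)
    (hinv : IsUnit (Wsᴴ * Gz * Es K L).det)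
    (V : Matrix (Fin K ⊕ Fin L) (Fin L) ℂ)
    (hV : V = Matrix.fromRows
      (-((Wsᴴ * Gz * Es K L)⁻¹ * (Wsᴴ * Gz * Ez K L))) (1 : Matrix (Fin L) (Fin L) ℂ))
    (Uz : Matrix (Fin K ⊕ Fin L) (Fin L) ℂ) (hUz : Uz = (Wᴴ * Gz)⁻¹ * Ez K L) :
    Submodule.span ℂ (Set.range Vᵀ) = Submodule.span ℂ (Set.range Uzᵀ) ∧
    Submodule.span ℂ (Set.range Uzᵀ) = LinearMap.ker (Wsᴴ * Gz).mulVecLin := by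
  set N := Wᴴ * Gz
  have hN : IsUnit N.det := by
    rw [det_mul, det_conjTranspose]
    exact hW.star.mul ((isUnit_iff_isUnit_det Gz).mp hGz.isUnit)
  have hA : Wsᴴ * Gz = (Es K L)ᵀ * N := by
    rw [hWs, conjTranspose_submatrix_inl_eq_transpose_Es_mul, Matrix.mul_assoc]
  have hker : Module.finrank ℂ (LinearMap.ker (Wsᴴ * Gz).mulVecLin) = Fintype.card (Fin L) := by
    rw [finrank_ker_mulVecLin_of_mul_eq_one (B := N⁻¹ * Es K L)]
    · simp
    · rw [hA, Matrix.mul_assoc, mul_nonsing_inv_cancel_left N _ hN, transpose_Es_mul_Es]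
  have hAV : Wsᴴ * Gz * V = 0 := by
    rw [hV, mul_fromRows_eq_mul_Es_add_mul_Ez, Matrix.mul_neg, ← Matrix.mul_assoc,
      mul_nonsing_inv _ hinv, Matrix.one_mul, Matrix.mul_one, neg_add_cancel]
  have hAUz : Wsᴴ * Gz * Uz = 0 := by
    rw [hA, hUz, Matrix.mul_assoc, mul_nonsing_inv_cancel_left N _ hN, transpose_Es_mul_Ez]
  have hCV : (Ez K L)ᵀ * V = 1 := by rw [hV, transpose_Ez_mul_fromRows]
  have hCUz : (Ez K L)ᵀ * N * Uz = 1 := by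
    rw [hUz, Matrix.mul_assoc, mul_nonsing_inv_cancel_left N _ hN, transpose_Ez_mul_Ez]
  have hV_ker := span_range_transpose_eq_ker_mulVecLin hCV hAV hker
  have hUz_ker := span_range_transpose_eq_ker_mulVecLin hCUz hAUz hker
  exact ⟨hV_ker.trans hUz_ker.symm, hUz_ker⟩

/-- The column space of
`V = [−(W_sᴴ G_z E_s)⁻¹(W_sᴴ G_z E_z); I]` equals the column space of
`U_z = (Wᴴ G_z)⁻¹ E_z`, and both equal the kernel of `v ↦ W_sᴴ G_z v`. -/
theorem colSpace_V_eq_colSpace_Uz (K L : ℕ) (hK : 1 ≤ K) (hL : 1 ≤ L)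
    (Gz : Matrix (Fin K ⊕ Fin L) (Fin K ⊕ Fin L) ℂ) (hGz : Gz.PosDef)
    (W : Matrix (Fin K ⊕ Fin L) (Fin K ⊕ Fin L) ℂ) (hW : IsUnit W.det)
    (Ws : Matrix (Fin K ⊕ Fin L) (Fin K) ℂ) (hWs : Ws = W.submatrix id Sum.inl)
    (hinv : IsUnit (Wsᴴ * Gz * Es K L).det)
    (V : Matrix (Fin K ⊕ Fin L) (Fin L) ℂ)
    (hV : V = Matrix.fromRows
      (-((Wsᴴ * Gz * Es K L)⁻¹ * (Wsᴴ * Gz * Ez K L))) (1 : Matrix (Fin L) (Fin L) ℂ))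
    (Uz : Matrix (Fin K ⊕ Fin L) (Fin L) ℂ) (hUz : Uz = (Wᴴ * Gz)⁻¹ * Ez K L) :
    Submodule.span ℂ (Set.range Vᵀ) = Submodule.span ℂ (Set.range Uzᵀ) ∧
    Submodule.span ℂ (Set.range Uzᵀ) = LinearMap.ker (Wsᴴ * Gz).mulVecLin :=
  colSpace_V_eq_colSpace_Uz_general K L Gz hGz W hW Ws hWs hinv V hV Uz hUz
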